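/- arXiv:2212.02072 — 2 statements merged into one kernel-verified Lean document; each statement's English description precedes it below -/
import Mathlib

section
/- Let A, B, E be real n×n matrices with A stable (spectral radius < 1), E symmetric positive semi-definite, and suppose P is a symmetric matrix satisfying AᵀPA − P + E ⪯ 0. Then P ⪰ ∑_{t=0}^∞ (Aᵀ)ᵗ E Aᵗ ⪰ 0. -/
/-!
Stability of `A` makes `∑ₜ ‖Aᵗ‖` converge, so for every `X` the series
`∑ₜ (Aᵀ)ᵗ (X - AᵀXA) Aᵗ` telescopes to `X`. Taking `X = P` and splitting
`P - AᵀPA = E + Q` with the slack `Q = -(AᵀPA - P + E) ⪰ 0` gives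
`P - ∑ₜ (Aᵀ)ᵗ E Aᵗ = ∑ₜ (Aᵀ)ᵗ Q Aᵗ`. Both series are sums of congruences of positive
semidefinite matrices, hence positive semidefinite because that cone is closed.
-/

open Matrix

/-- A real matrix is (Schur) stable if all its complex eigenvalues
have modulus strictly less than 1 (spectral radius `< 1`). -/
def IsStable {n : ℕ} (A : Matrix (Fin n) (Fin n) ℝ) : Prop :=
  ∀ z ∈ spectrum ℂ (A.map (algebraMap ℝ ℂ)), ‖z‖ < 1

open Filter
open scoped Topology

section BanachAlgebra

variable {𝔸 : Type*} [NormedRing 𝔸] [NormedAlgebra ℂ 𝔸] [CompleteSpace 𝔸] {a : 𝔸}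

theorem spectralRadius_lt_one_of_forall_norm_lt_one (ha : ∀ z ∈ spectrum ℂ a, ‖z‖ < 1) :
    spectralRadius ℂ a < 1 := by
  rcases (spectrum ℂ a).eq_empty_or_nonempty with h | h
  · simp [spectralRadius, h]
  · exact_mod_cast spectrum.spectralRadius_lt_of_forall_lt_of_nonempty h
      (r := 1) fun z hz => by simpa [← NNReal.coe_lt_coe] using ha z hz

/-- The Neumann series `∑ zⁿ aⁿ` of the resolvent converges for `‖z‖ < 1 / ρ(a)`, and `ρ(a) < 1`
lets us take `z = 1`. -/
theorem summable_norm_pow_of_spectralRadius_lt_one (ha : spectralRadius ℂ a < 1) :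
    Summable fun t : ℕ => ‖a ^ t‖ := by
  obtain ⟨r, hr1, hr⟩ := ENNReal.lt_iff_exists_nnreal_btwn.mp (ENNReal.one_lt_inv.mpr ha)
  have hr0 : 0 < r := by exact_mod_cast zero_lt_one.trans hr1
  have hp := ((spectrum.hasFPowerSeriesOnBall_inverse_one_sub_smul ℂ a).exchange_radius
    ((spectrum.differentiableOn_inverse_one_sub_smul hr).hasFPowerSeriesOnBall hr0)).r_le
  simpa [ContinuousMultilinearMap.norm_mkPiRing] using
    FormalMultilinearSeries.summable_norm_mul_pow _ (r := 1) (hr1.trans_le hp)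

end BanachAlgebra

section NormedRing

variable {R : Type*} [NormedRing R] [CompleteSpace R] {a b : R}

theorem summable_pow_mul_mul_pow (ha : Summable fun t : ℕ => ‖a ^ t‖)
    (hb : Summable fun t : ℕ => ‖b ^ t‖) (y : R) :
    Summable fun t : ℕ => b ^ t * y * a ^ t := by
  refine .of_norm_bounded (ha.mul_left ((∑' s, ‖b ^ s‖) * ‖y‖)) fun t => ?_
  calc ‖b ^ t * y * a ^ t‖ ≤ ‖b ^ t‖ * ‖y‖ * ‖a ^ t‖ := norm_mul₃_le
    _ ≤ (∑' s, ‖b ^ s‖) * ‖y‖ * ‖a ^ t‖ := by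
        gcongr
        exact hb.le_tsum t fun _ _ => norm_nonneg _

theorem hasSum_pow_mul_sub_mul_mul_pow (ha : Summable fun t : ℕ => ‖a ^ t‖)
    (hb : Summable fun t : ℕ => ‖b ^ t‖) (x : R) :
    HasSum (fun t : ℕ => b ^ t * (x - b * x * a) * a ^ t) x := by
  have hs := summable_pow_mul_mul_pow ha hb (x - b * x * a)
  have htelescope (T : ℕ) :
      ∑ t ∈ Finset.range T, b ^ t * (x - b * x * a) * a ^ t = x - b ^ T * x * a ^ T :=
    calc ∑ t ∈ Finset.range T, b ^ t * (x - b * x * a) * a ^ t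
        = ∑ t ∈ Finset.range T, (b ^ t * x * a ^ t - b ^ (t + 1) * x * a ^ (t + 1)) := by
          refine Finset.sum_congr rfl fun t _ => ?_
          rw [pow_succ b, pow_succ' a]
          noncomm_ring
      _ = x - b ^ T * x * a ^ T := by
          simpa using Finset.sum_range_sub' (fun t => b ^ t * x * a ^ t) T
  have hlim : Tendsto (fun T : ℕ => x - b ^ T * x * a ^ T) atTop (𝓝 x) := by
    simpa using tendsto_const_nhds.sub (summable_pow_mul_mul_pow ha hb x).tendsto_atTop_zero
  convert hs.hasSum
  exact tendsto_nhds_unique hlim (by simpa only [htelescope] using hs.hasSum.tendsto_sum_nat)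

end NormedRing

section PosSemidef

open scoped ComplexOrder

variable {n 𝕜 : Type*} [Fintype n] [RCLike 𝕜]

theorem Matrix.isClosed_setOf_posSemidef : IsClosed {M : Matrix n n 𝕜 | M.PosSemidef} := by
  simp only [posSemidef_iff_dotProduct_mulVec, Set.ofPred_and, Set.ofPred_forall]
  refine .inter (isClosed_eq continuous_id.matrix_conjTranspose continuous_id)
    (isClosed_iInter fun x => isClosed_le continuous_const ?_)
  fun_prop

theorem Matrix.PosSemidef.tsum {ι : Type*} {f : ι → Matrix n n 𝕜} (hf : ∀ i, (f i).PosSemidef) :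
    (∑' i, f i).PosSemidef := by
  by_cases hs : Summable f
  · exact isClosed_setOf_posSemidef.mem_of_tendsto hs.hasSum
      (.of_forall fun s => posSemidef_sum s fun i _ => hf i)
  · simpa [tsum_eq_zero_of_not_summable hs] using PosSemidef.zero

theorem Matrix.PosSemidef.transpose_mul_mul_same {m : Type*} [Finite m] {M : Matrix n n ℝ}
    (hM : M.PosSemidef) (B : Matrix n m ℝ) : (Bᵀ * M * B).PosSemidef := by
  simpa using hM.conjTranspose_mul_mul_same B

end PosSemidef

namespace IsStable

variable {n : ℕ} {A : Matrix (Fin n) (Fin n) ℝ}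

-- The Frobenius norm is submultiplicative and invariant under transposition and under `ℝ → ℂ`.
open scoped Matrix.Norms.Frobenius in
theorem summable_norm_pow (hA : IsStable A) : Summable fun t : ℕ => ‖A ^ t‖ := by
  convert summable_norm_pow_of_spectralRadius_lt_one
    (spectralRadius_lt_one_of_forall_norm_lt_one hA) using 2 with t
  rw [← Matrix.map_pow, frobenius_norm_map_eq]
  simp

open scoped Matrix.Norms.Frobenius in
theorem summable_norm_transpose_pow (hA : IsStable A) : Summable fun t : ℕ => ‖Aᵀ ^ t‖ := by
  simpa only [← transpose_pow, frobenius_norm_transpose] using hA.summable_norm_pow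

theorem summable_transpose_pow_mul_mul_pow (hA : IsStable A) (M : Matrix (Fin n) (Fin n) ℝ) :
    Summable fun t : ℕ => Aᵀ ^ t * M * A ^ t :=
  open scoped Matrix.Norms.Frobenius in
  summable_pow_mul_mul_pow hA.summable_norm_pow hA.summable_norm_transpose_pow M

theorem hasSum_transpose_pow_mul_sub_mul_mul_pow (hA : IsStable A)
    (X : Matrix (Fin n) (Fin n) ℝ) :
    HasSum (fun t : ℕ => Aᵀ ^ t * (X - Aᵀ * X * A) * A ^ t) X :=
  open scoped Matrix.Norms.Frobenius in
  hasSum_pow_mul_sub_mul_mul_pow hA.summable_norm_pow hA.summable_norm_transpose_pow X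

end IsStable

theorem lyapunov_inequality_lower_bound_general {n : ℕ}
    (A E P : Matrix (Fin n) (Fin n) ℝ)
    (hA : IsStable A) (hE : E.PosSemidef)
    (hineq : (-(Aᵀ * P * A - P + E)).PosSemidef) :
    (P - ∑' t : ℕ, Aᵀ ^ t * E * A ^ t).PosSemidef ∧
    (∑' t : ℕ, Aᵀ ^ t * E * A ^ t).PosSemidef := by
  have hconj {M : Matrix (Fin n) (Fin n) ℝ} (hM : M.PosSemidef) (t : ℕ) :
      (Aᵀ ^ t * M * A ^ t).PosSemidef := by
    simpa only [transpose_pow] using hM.transpose_mul_mul_same (A ^ t)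
  have hslack : HasSum (fun t : ℕ => Aᵀ ^ t * -(Aᵀ * P * A - P + E) * A ^ t)
      (P - ∑' t : ℕ, Aᵀ ^ t * E * A ^ t) := by
    have hslack_eq (t : ℕ) : Aᵀ ^ t * -(Aᵀ * P * A - P + E) * A ^ t
        = Aᵀ ^ t * (P - Aᵀ * P * A) * A ^ t - Aᵀ ^ t * E * A ^ t := by
      noncomm_ring
    simpa only [hslack_eq] using (hA.hasSum_transpose_pow_mul_sub_mul_mul_pow P).sub
      (hA.summable_transpose_pow_mul_mul_pow E).hasSum
  rw [← hslack.tsum_eq]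
  exact ⟨.tsum (hconj hineq), .tsum (hconj hE)⟩

/-- Comparison lemma: if `A` is stable, `E ⪰ 0`, and `AᵀPA − P + E ⪯ 0` for a
symmetric `P`, then `P ⪰ ∑ₜ (Aᵀ)ᵗ E Aᵗ ⪰ 0`. -/
theorem lyapunov_inequality_lower_bound {n : ℕ}
    (A E P : Matrix (Fin n) (Fin n) ℝ)
    (hA : IsStable A) (hE : E.PosSemidef) (hP : P.IsSymm)
    (hineq : (-(Aᵀ * P * A - P + E)).PosSemidef) :
    (P - ∑' t : ℕ, Aᵀ ^ t * E * A ^ t).PosSemidef ∧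
    (∑' t : ℕ, Aᵀ ^ t * E * A ^ t).PosSemidef :=
  lyapunov_inequality_lower_bound_general A E P hA hE hineq
end

section
/- Let Q, R be symmetric positive definite and suppose K ∈ ℝ^{m×n} and symmetric P_K ≻ 0 satisfy (A−BK)ᵀ U_K (A−BK) − P_K + Q + KᵀRK = 0 where U_K ⪰ 0. Then Kᵀ R K ⪯ P_K; in particular, ‖K‖² ≤ ‖P_K‖ / λ_min(R), so K is bounded in terms of P_K and R. -/
open Matrix

/-- Spectral (operator 2-) norm of a real matrix. -/
noncomputable def sNorm {m n : ℕ} (A : Matrix (Fin m) (Fin n) ℝ) : ℝ :=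
  ‖(Matrix.toEuclideanLin A).toContinuousLinearMap‖

/-!
The Lyapunov equation writes `P_K - KᵀRK` as `(A - BK)ᵀ U_K (A - BK) + Q ⪰ 0`. Since
`R ⪰ λ_min(R) • 1`, also `λ_min(R) • KᵀK ⪯ KᵀRK ⪯ P_K`, i.e.
`λ_min(R) ‖Kx‖² ≤ ⟪P_K x, x⟫ ≤ ‖P_K‖ ‖x‖²` for every `x`.
-/

open scoped InnerProductSpace ComplexOrder MatrixOrder

section
variable {𝕜 E F : Type*} [RCLike 𝕜] [NormedAddCommGroup E] [InnerProductSpace 𝕜 E]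
  [NormedAddCommGroup F] [InnerProductSpace 𝕜 F]

theorem ContinuousLinearMap.opNorm_sq_le_div_of_forall_le_re_inner {T : E →L[𝕜] F}
    {S : E →L[𝕜] E} {c : ℝ} (hc : 0 < c)
    (h : ∀ x, c * ‖T x‖ ^ 2 ≤ RCLike.re ⟪S x, x⟫_𝕜) :
    ‖T‖ ^ 2 ≤ ‖S‖ / c := by
  have hM : 0 ≤ ‖S‖ / c := by positivity
  suffices ‖T‖ ≤ √(‖S‖ / c) from (Real.le_sqrt (norm_nonneg _) hM).1 this
  refine T.opNorm_le_bound (Real.sqrt_nonneg _) fun x ↦ ?_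
  rw [← Real.sqrt_sq (norm_nonneg x), ← Real.sqrt_mul hM,
    Real.le_sqrt (norm_nonneg _) (by positivity), div_mul_eq_mul_div, le_div_iff₀ hc]
  calc ‖T x‖ ^ 2 * c ≤ RCLike.re ⟪S x, x⟫_𝕜 := by linarith [h x]
    _ ≤ ‖S x‖ * ‖x‖ := re_inner_le_norm _ _
    _ ≤ ‖S‖ * ‖x‖ * ‖x‖ := by gcongr; exact S.le_opNorm x
    _ = ‖S‖ * ‖x‖ ^ 2 := by ring

end

namespace Matrix

variable {𝕜 : Type*} [RCLike 𝕜] {m n : Type*} [Fintype m] [Fintype n] [DecidableEq m]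

theorem IsHermitian.posSemidef_sub_smul_one {R : Matrix m m 𝕜} (hR : R.IsHermitian) {c : ℝ}
    (hc : ∀ i, c ≤ hR.eigenvalues i) : (R - c • 1).PosSemidef := by
  have := (algebraMap_le_iff_le_spectrum (a := R) (r := c) hR.isSelfAdjoint).2 ?_
  · rwa [Algebra.algebraMap_eq_smul_one, le_iff] at this
  · rw [hR.spectrum_real_eq_range_eigenvalues]
    rintro _ ⟨i, rfl⟩
    exact hc i

theorem IsHermitian.smul_conjTranspose_mul_self_le {R : Matrix m m 𝕜} (hR : R.IsHermitian)
    {c : ℝ} (hc : ∀ i, c ≤ hR.eigenvalues i) (K : Matrix m n 𝕜) :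
    c • (Kᴴ * K) ≤ Kᴴ * R * K := by
  have := (hR.posSemidef_sub_smul_one hc).conjTranspose_mul_mul_same K
  rwa [Matrix.mul_sub, Matrix.sub_mul, Matrix.mul_smul, Matrix.smul_mul, Matrix.mul_one] at this

variable [DecidableEq n] in
theorem mul_norm_toEuclideanLin_sq_le_re_inner_of_smul_le {K : Matrix m n 𝕜}
    {P : Matrix n n 𝕜} {c : ℝ} (h : c • (Kᴴ * K) ≤ P) (x : EuclideanSpace 𝕜 n) :
    c * ‖toEuclideanLin K x‖ ^ 2 ≤ RCLike.re ⟪toEuclideanLin P x, x⟫_𝕜 := by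
  rw [le_iff, RCLike.real_smul_eq_coe_smul (K := 𝕜)] at h
  have := (isPositive_toEuclideanLin_iff.2 h).re_inner_nonneg_left x
  rw [map_sub, map_smul, toLpLin_mul_same, toEuclideanLin_conjTranspose_eq_adjoint,
    LinearMap.sub_apply, inner_sub_left, map_sub, LinearMap.smul_apply, LinearMap.comp_apply,
    inner_smul_left, LinearMap.adjoint_inner_left, inner_self_eq_norm_sq_to_K,
    RCLike.conj_ofReal, ← RCLike.ofReal_pow, ← RCLike.ofReal_mul, RCLike.ofReal_re] at this
  exact sub_nonneg.1 this

end Matrix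

theorem transpose_mul_mul_le_of_lyapunov_eq {ι κ : Type*} [Fintype ι] [Fintype κ]
    {A P Q U : Matrix ι ι ℝ} {B : Matrix ι κ ℝ} {K : Matrix κ ι ℝ}
    {R : Matrix κ κ ℝ} (hQ : Q.PosSemidef) (hU : U.PosSemidef)
    (heq : (A - B * K)ᵀ * U * (A - B * K) - P + Q + Kᵀ * R * K = 0) : Kᵀ * R * K ≤ P := by
  have hres : P - Kᵀ * R * K = (A - B * K)ᴴ * U * (A - B * K) + Q := by
    rw [conjTranspose_eq_transpose_of_trivial, ← sub_eq_zero, ← neg_eq_zero, ← heq]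
    abel
  rw [le_iff, hres]
  exact (hU.conjTranspose_mul_mul_same _).add hQ

theorem sNorm_sq_le_div_of_smul_le {m n : ℕ} {K : Matrix (Fin m) (Fin n) ℝ}
    {P : Matrix (Fin n) (Fin n) ℝ} {c : ℝ} (hc : 0 < c) (h : c • (Kᵀ * K) ≤ P) :
    sNorm K ^ 2 ≤ sNorm P / c :=
  ContinuousLinearMap.opNorm_sq_le_div_of_forall_le_re_inner hc
    (mul_norm_toEuclideanLin_sq_le_re_inner_of_smul_le h)

theorem gain_bounded_by_cost_general {n m : ℕ}
    (A : Matrix (Fin n) (Fin n) ℝ) (B : Matrix (Fin n) (Fin m) ℝ)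
    (K : Matrix (Fin m) (Fin n) ℝ)
    (Q PK UK : Matrix (Fin n) (Fin n) ℝ) (R : Matrix (Fin m) (Fin m) ℝ)
    (hQ : Q.PosDef) (hR : R.PosDef) (hUK : UK.PosSemidef)
    (heq : (A - B * K)ᵀ * UK * (A - B * K) - PK + Q + Kᵀ * R * K = 0) :
    (PK - Kᵀ * R * K).PosSemidef ∧
    sNorm K ^ 2 ≤ sNorm PK / (⨅ i, hR.1.eigenvalues i) := by
  have hgain : Kᵀ * R * K ≤ PK := transpose_mul_mul_le_of_lyapunov_eq hQ.posSemidef hUK heq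
  refine ⟨hgain, ?_⟩
  rcases isEmpty_or_nonempty (Fin m) with hm | hm
  · -- for `m = 0` both `K` and the empty infimum are `0`
    simp [Subsingleton.elim K 0, sNorm]
  · have hmin_pos : 0 < ⨅ i, hR.1.eigenvalues i := by
      obtain ⟨i, hi⟩ := exists_eq_ciInf_of_finite (f := hR.1.eigenvalues)
      exact (hR.eigenvalues_pos i).trans_eq hi
    have hmin_le : ∀ i, ⨅ j, hR.1.eigenvalues j ≤ hR.1.eigenvalues i :=
      ciInf_le (Set.finite_range _).bddBelow
    exact sNorm_sq_le_div_of_smul_le hmin_pos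
      ((hR.1.smul_conjTranspose_mul_self_le hmin_le K).trans hgain)

/-- Boundedness of admissible gains: if
`(A−BK)ᵀ U_K (A−BK) − P_K + Q + KᵀRK = 0` with `Q, R ≻ 0`, `P_K ≻ 0`,
`U_K ⪰ 0`, then `KᵀRK ⪯ P_K` and `‖K‖² ≤ ‖P_K‖ / λ_min(R)`. -/
theorem gain_bounded_by_cost {n m : ℕ}
    (A : Matrix (Fin n) (Fin n) ℝ) (B : Matrix (Fin n) (Fin m) ℝ)
    (K : Matrix (Fin m) (Fin n) ℝ)
    (Q PK UK : Matrix (Fin n) (Fin n) ℝ) (R : Matrix (Fin m) (Fin m) ℝ)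
    (hQ : Q.PosDef) (hR : R.PosDef) (hPK : PK.PosDef) (hUK : UK.PosSemidef)
    (heq : (A - B * K)ᵀ * UK * (A - B * K) - PK + Q + Kᵀ * R * K = 0) :
    (PK - Kᵀ * R * K).PosSemidef ∧
    sNorm K ^ 2 ≤ sNorm PK / (⨅ i, hR.1.eigenvalues i) :=
  gain_bounded_by_cost_general A B K Q PK UK R hQ hR hUK heq
end
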